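/- Let (x_1, x_2) be a bivariate Gaussian with mean μ ∈ ℝ² and covariance matrix Σ with Σ_{11} = Σ_{22} = 1 and correlation ρ = Σ_{12} ∈ (−1, 1). Then the orthant probability P(x_1 > 0, x_2 > 0) is a strictly increasing function of ρ. -/

import Mathlib

/-!
Write `φ_ρ` for the centred bivariate normal density with unit variances and correlation `ρ`;
after translating by the mean, the orthant probability is the `φ_ρ`-mass of the quadrant
`(-μ₁, ∞) × (-μ₂, ∞)`. Plackett's identity `∂φ_ρ/∂ρ = ∂²φ_ρ/∂u∂v` lets one differentiate under
the integral sign and integrate the mixed partial derivative explicitly, giving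
`d/dρ P(x₁ > 0, x₂ > 0) = φ_ρ(-μ₁, -μ₂) > 0`. Differentiation under the integral is justified by
a Gaussian bound, uniform for `ρ` in compact subsets of `(-1, 1)`, on `φ_ρ` and its derivatives.
-/

open Real MeasureTheory

/-- The orthant probability `P(x₁ > 0, x₂ > 0)` of a bivariate Gaussian with mean
`(μ₁, μ₂)`, unit variances and correlation `ρ`, written as an explicit integral of the
bivariate Gaussian density. -/
noncomputable def orthantProb (μ₁ μ₂ ρ : ℝ) : ℝ :=
  ∫ p in Set.Ioi (0 : ℝ) ×ˢ Set.Ioi (0 : ℝ),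
    (2 * π * Real.sqrt (1 - ρ ^ 2))⁻¹ *
      Real.exp (-(((p.1 - μ₁) ^ 2 - 2 * ρ * (p.1 - μ₁) * (p.2 - μ₂) + (p.2 - μ₂) ^ 2)
        / (2 * (1 - ρ ^ 2))))

open Set Filter Topology

lemma one_sub_sq_pos {ρ : ℝ} (hρ : |ρ| < 1) : 0 < 1 - ρ ^ 2 :=
  sub_pos.mpr ((sq_lt_one_iff_abs_lt_one ρ).mpr hρ)

lemma one_add_mul_exp_neg_le {b : ℝ} (hb : 0 < b) (hb2 : b ≤ 2) (T : ℝ) :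
    (1 + T) * exp (-(b * T)) ≤ 2 / b * exp (-(b / 2 * T)) := by
  have hT : 1 + T ≤ 2 / b * exp (b / 2 * T) := by
    have h2b : 1 ≤ 2 / b := by rw [le_div_iff₀ hb]; linarith
    calc 1 + T ≤ 2 / b * (b / 2 * T + 1) := by field_simp; linarith
      _ ≤ 2 / b * exp (b / 2 * T) := by gcongr; exact add_one_le_exp _
  calc (1 + T) * exp (-(b * T)) ≤ 2 / b * exp (b / 2 * T) * exp (-(b * T)) := by gcongr
    _ = 2 / b * exp (-(b / 2 * T)) := by rw [mul_assoc, ← exp_add]; ring_nf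

lemma sq_sub_two_mul_mul_add_sq_ge (ρ u v : ℝ) :
    (1 - |ρ|) * (u ^ 2 + v ^ 2) ≤ u ^ 2 - 2 * ρ * u * v + v ^ 2 := by
  have huv : 2 * |u * v| ≤ u ^ 2 + v ^ 2 := by
    nlinarith [sq_nonneg (|u| - |v|), sq_abs u, sq_abs v, abs_mul u v]
  have hρuv : ρ * (u * v) ≤ |ρ| * |u * v| := (le_abs_self _).trans (abs_mul _ _).le
  nlinarith [mul_le_mul_of_nonneg_left huv (abs_nonneg ρ)]

section GaussianDomination

variable {C k : ℝ}

lemma integrable_of_abs_le_exp_neg_mul_sq {f : ℝ → ℝ} (hf : Continuous f) (hk : 0 < k)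
    (hfC : ∀ x, |f x| ≤ C * exp (-(k * x ^ 2))) : Integrable f := by
  refine ((integrable_exp_neg_mul_sq hk).const_mul C).mono' hf.aestronglyMeasurable
    (.of_forall fun x => ?_)
  simpa [neg_mul] using hfC x

lemma tendsto_zero_of_abs_le_exp_neg_mul_sq {f : ℝ → ℝ} (hk : 0 < k)
    (hfC : ∀ x, |f x| ≤ C * exp (-(k * x ^ 2))) : Tendsto f atTop (𝓝 0) := by
  refine squeeze_zero_norm (fun x => (norm_eq_abs (f x)).trans_le (hfC x)) ?_
  simpa using ((tendsto_exp_atBot.comp (tendsto_neg_atTop_atBot.comp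
    ((tendsto_pow_atTop two_ne_zero).const_mul_atTop hk))).const_mul C)

lemma integrable_mul_exp_neg_mul_sq_mul_exp_neg_mul_sq (C : ℝ) (hk : 0 < k) :
    Integrable fun p : ℝ × ℝ => C * exp (-(k * p.1 ^ 2)) * exp (-(k * p.2 ^ 2)) := by
  have h := ((integrable_exp_neg_mul_sq hk).const_mul C).mul_prod (integrable_exp_neg_mul_sq hk)
  simpa only [← Measure.volume_eq_prod, neg_mul] using h

lemma integrable_of_abs_le_exp_neg_mul_sq_mul {f : ℝ × ℝ → ℝ} (hf : Continuous f) (hk : 0 < k)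
    (hfC : ∀ p, |f p| ≤ C * exp (-(k * p.1 ^ 2)) * exp (-(k * p.2 ^ 2))) : Integrable f :=
  (integrable_mul_exp_neg_mul_sq_mul_exp_neg_mul_sq C hk).mono' hf.aestronglyMeasurable
    (.of_forall fun p => (norm_eq_abs _).trans_le (hfC p))

end GaussianDomination

namespace BivariateNormal

noncomputable def pdf (ρ u v : ℝ) : ℝ :=
  (2 * π * √(1 - ρ ^ 2))⁻¹ * exp (-((u ^ 2 - 2 * ρ * u * v + v ^ 2) / (2 * (1 - ρ ^ 2))))

noncomputable def pdfDerivFst (ρ u v : ℝ) : ℝ :=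
  -(pdf ρ u v * ((u - ρ * v) / (1 - ρ ^ 2)))

/-- `∂²pdf/∂u∂v`, which by Plackett's identity `hasDerivAt_pdf_corr` is also `∂pdf/∂ρ`. -/
noncomputable def pdfDerivFstSnd (ρ u v : ℝ) : ℝ :=
  pdf ρ u v * ((u - ρ * v) * (v - ρ * u) / (1 - ρ ^ 2) ^ 2 + ρ / (1 - ρ ^ 2))

variable {ρ : ℝ}

lemma pdf_pos (hρ : |ρ| < 1) (u v : ℝ) : 0 < pdf ρ u v := by
  have := one_sub_sq_pos hρ
  unfold pdf; positivity

lemma hasDerivAt_pdf_fst (hρ : |ρ| < 1) (u v : ℝ) :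
    HasDerivAt (fun u => pdf ρ u v) (pdfDerivFst ρ u v) u := by
  have hs := (one_sub_sq_pos hρ).ne'
  have hQ : HasDerivAt (fun u : ℝ => u ^ 2 - 2 * ρ * u * v + v ^ 2) (2 * u - 2 * ρ * v) u := by
    refine (((hasDerivAt_pow 2 u).sub (((hasDerivAt_id u).const_mul (2 * ρ)).mul_const v)).add_const
      (v ^ 2)).congr_deriv ?_
    ring
  refine ((hQ.div_const (2 * (1 - ρ ^ 2))).neg.exp.const_mul
    (2 * π * √(1 - ρ ^ 2))⁻¹).congr_deriv ?_
  unfold pdfDerivFst pdf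
  simp only [Pi.neg_apply]
  field_simp

lemma hasDerivAt_pdfDerivFst_snd (hρ : |ρ| < 1) (u v : ℝ) :
    HasDerivAt (fun v => pdfDerivFst ρ u v) (pdfDerivFstSnd ρ u v) v := by
  have hs := (one_sub_sq_pos hρ).ne'
  have hQ : HasDerivAt (fun v : ℝ => u ^ 2 - 2 * ρ * u * v + v ^ 2) (2 * v - 2 * ρ * u) v := by
    refine (((hasDerivAt_const v (u ^ 2)).sub ((hasDerivAt_id v).const_mul (2 * ρ * u))).add
      (hasDerivAt_pow 2 v)).congr_deriv ?_
    ring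
  have hpdf := (hQ.div_const (2 * (1 - ρ ^ 2))).neg.exp.const_mul (2 * π * √(1 - ρ ^ 2))⁻¹
  have hlin : HasDerivAt (fun v => (u - ρ * v) / (1 - ρ ^ 2)) (-ρ / (1 - ρ ^ 2)) v := by
    refine (((hasDerivAt_const v u).sub ((hasDerivAt_id v).const_mul ρ)).div_const
      (1 - ρ ^ 2)).congr_deriv ?_
    ring
  refine (hpdf.mul hlin).neg.congr_deriv ?_
  unfold pdfDerivFstSnd pdf
  simp only [Pi.neg_apply]
  field_simp
  ring

lemma hasDerivAt_normalizer (hρ : |ρ| < 1) :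
    HasDerivAt (fun r : ℝ => (2 * π * √(1 - r ^ 2))⁻¹)
      ((2 * π * √(1 - ρ ^ 2))⁻¹ * (ρ / (1 - ρ ^ 2))) ρ := by
  have hs := one_sub_sq_pos hρ
  have hsqrt : HasDerivAt (fun r : ℝ => √(1 - r ^ 2)) (-(2 * ρ) / (2 * √(1 - ρ ^ 2))) ρ := by
    refine (((hasDerivAt_const ρ 1).sub (hasDerivAt_pow 2 ρ)).sqrt hs.ne').congr_deriv ?_
    simp
  have hne : 2 * π * √(1 - ρ ^ 2) ≠ 0 := by positivity
  refine ((hsqrt.const_mul (2 * π)).inv hne).congr_deriv ?_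
  have ht : √(1 - ρ ^ 2) ^ 2 = 1 - ρ ^ 2 := sq_sqrt hs.le
  field_simp
  rw [ht]

lemma hasDerivAt_exponent (hρ : |ρ| < 1) (u v : ℝ) :
    HasDerivAt (fun r => -((u ^ 2 - 2 * r * u * v + v ^ 2) / (2 * (1 - r ^ 2))))
      ((u - ρ * v) * (v - ρ * u) / (1 - ρ ^ 2) ^ 2) ρ := by
  have hs := (one_sub_sq_pos hρ).ne'
  have hQ : HasDerivAt (fun r : ℝ => u ^ 2 - 2 * r * u * v + v ^ 2) (-(2 * u * v)) ρ := by
    refine (((hasDerivAt_const ρ (u ^ 2)).sub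
      ((((hasDerivAt_id ρ).const_mul 2).mul_const u).mul_const v)).add_const (v ^ 2)).congr_deriv ?_
    ring
  have hden : HasDerivAt (fun r : ℝ => 2 * (1 - r ^ 2)) (2 * -(2 * ρ)) ρ := by
    refine (((hasDerivAt_const ρ 1).sub (hasDerivAt_pow 2 ρ)).const_mul 2).congr_deriv ?_
    ring
  refine (hQ.div hden (by positivity)).neg.congr_deriv ?_
  field_simp
  ring

/-- Plackett's identity. -/
lemma hasDerivAt_pdf_corr (hρ : |ρ| < 1) (u v : ℝ) :
    HasDerivAt (fun r => pdf r u v) (pdfDerivFstSnd ρ u v) ρ := by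
  refine ((hasDerivAt_normalizer hρ).mul (hasDerivAt_exponent hρ u v).exp).congr_deriv ?_
  unfold pdfDerivFstSnd pdf
  ring

lemma pdf_le {a : ℝ} (ha : a < 1) (hρ : |ρ| ≤ a) (u v : ℝ) :
    pdf ρ u v ≤ (2 * π * √(1 - a ^ 2))⁻¹ * exp (-((1 - a) / 2 * (u ^ 2 + v ^ 2))) := by
  have hρa : ρ ^ 2 ≤ a ^ 2 := by
    rw [← sq_abs]; exact pow_le_pow_left₀ (abs_nonneg ρ) hρ 2
  have ha2 : 0 < 1 - a ^ 2 := by nlinarith [abs_nonneg ρ]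
  have hQ := sq_sub_two_mul_mul_add_sq_ge ρ u v
  have hQ0 : 0 ≤ u ^ 2 - 2 * ρ * u * v + v ^ 2 :=
    le_trans (mul_nonneg (by linarith) (by positivity)) hQ
  have hexp : (1 - a) / 2 * (u ^ 2 + v ^ 2) ≤
      (u ^ 2 - 2 * ρ * u * v + v ^ 2) / (2 * (1 - ρ ^ 2)) := by
    have h2 : (u ^ 2 - 2 * ρ * u * v + v ^ 2) / 2 ≤
        (u ^ 2 - 2 * ρ * u * v + v ^ 2) / (2 * (1 - ρ ^ 2)) :=
      div_le_div_of_nonneg_left hQ0 (by nlinarith) (by nlinarith [sq_nonneg ρ])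
    nlinarith [mul_le_mul_of_nonneg_right hρ (by positivity : (0 : ℝ) ≤ u ^ 2 + v ^ 2)]
  unfold pdf
  gcongr

-- The weight `1 + (u ^ 2 + v ^ 2)` absorbs the polynomial factors of the derivatives of `pdf`.
lemma exists_pdf_mul_le {a : ℝ} (ha0 : 0 ≤ a) (ha : a < 1) :
    ∃ C k : ℝ, 0 < k ∧ ∀ ρ, |ρ| ≤ a → ∀ u v,
      pdf ρ u v * (1 + (u ^ 2 + v ^ 2)) ≤ C * exp (-(k * u ^ 2)) * exp (-(k * v ^ 2)) := by
  set b := (1 - a) / 2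
  have hb : 0 < b := by simp only [b]; linarith
  refine ⟨(2 * π * √(1 - a ^ 2))⁻¹ * (2 / b), b / 2, by positivity, fun ρ hρ u v => ?_⟩
  calc pdf ρ u v * (1 + (u ^ 2 + v ^ 2))
      ≤ (2 * π * √(1 - a ^ 2))⁻¹ * exp (-(b * (u ^ 2 + v ^ 2))) * (1 + (u ^ 2 + v ^ 2)) :=
        mul_le_mul_of_nonneg_right (pdf_le ha hρ u v) (by positivity)
    _ = (2 * π * √(1 - a ^ 2))⁻¹ * ((1 + (u ^ 2 + v ^ 2)) * exp (-(b * (u ^ 2 + v ^ 2)))) := by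
        ring
    _ ≤ (2 * π * √(1 - a ^ 2))⁻¹ * (2 / b * exp (-(b / 2 * (u ^ 2 + v ^ 2)))) :=
        mul_le_mul_of_nonneg_left (one_add_mul_exp_neg_le hb (by simp only [b]; linarith) _)
          (by positivity)
    _ = _ := by
        rw [mul_add, neg_add, exp_add]; ring

lemma abs_pdfDerivFst_le (hρ : |ρ| < 1) (u v : ℝ) :
    |pdfDerivFst ρ u v| ≤ 2 * (pdf ρ u v * (1 + (u ^ 2 + v ^ 2))) / (1 - ρ ^ 2) ^ 2 := by
  have hs := one_sub_sq_pos hρ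
  have hs1 : 1 - ρ ^ 2 ≤ 1 := by nlinarith
  have hp := pdf_pos hρ u v
  have hlin : |u - ρ * v| ≤ 2 * (1 + (u ^ 2 + v ^ 2)) := by
    have : |ρ * v| ≤ |v| := by
      rw [abs_mul]; exact mul_le_of_le_one_left (abs_nonneg v) hρ.le
    nlinarith [abs_sub u (ρ * v), sq_nonneg (|u| - 1), sq_abs u, sq_nonneg (|v| - 1), sq_abs v]
  rw [pdfDerivFst, abs_neg, abs_mul, abs_of_pos hp, abs_div, abs_of_pos hs,
    le_div_iff₀ (by positivity)]
  calc pdf ρ u v * (|u - ρ * v| / (1 - ρ ^ 2)) * (1 - ρ ^ 2) ^ 2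
      = pdf ρ u v * |u - ρ * v| * (1 - ρ ^ 2) := by field_simp
    _ ≤ pdf ρ u v * (2 * (1 + (u ^ 2 + v ^ 2))) * 1 := by gcongr
    _ = _ := by ring

lemma abs_pdfDerivFstSnd_le (hρ : |ρ| < 1) (u v : ℝ) :
    |pdfDerivFstSnd ρ u v| ≤ 2 * (pdf ρ u v * (1 + (u ^ 2 + v ^ 2))) / (1 - ρ ^ 2) ^ 2 := by
  have hs := one_sub_sq_pos hρ
  have hp := pdf_pos hρ u v
  have hprod : |(u - ρ * v) * (v - ρ * u)| ≤ 2 * (u ^ 2 + v ^ 2) := by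
    have h1 : |u - ρ * v| ≤ |u| + |v| := by
      refine (abs_sub _ _).trans ?_
      rw [abs_mul]; gcongr; exact mul_le_of_le_one_left (abs_nonneg v) hρ.le
    have h2 : |v - ρ * u| ≤ |v| + |u| := by
      refine (abs_sub _ _).trans ?_
      rw [abs_mul]; gcongr; exact mul_le_of_le_one_left (abs_nonneg u) hρ.le
    rw [abs_mul]
    nlinarith [mul_le_mul h1 h2 (abs_nonneg _) (by positivity), sq_nonneg (|u| - |v|), sq_abs u,
      sq_abs v]
  have hfac : |(u - ρ * v) * (v - ρ * u) / (1 - ρ ^ 2) ^ 2 + ρ / (1 - ρ ^ 2)| ≤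
      2 * (1 + (u ^ 2 + v ^ 2)) / (1 - ρ ^ 2) ^ 2 := by
    have h1 : |(u - ρ * v) * (v - ρ * u) / (1 - ρ ^ 2) ^ 2| ≤
        2 * (u ^ 2 + v ^ 2) / (1 - ρ ^ 2) ^ 2 := by
      rw [abs_div, abs_of_pos (by positivity : 0 < (1 - ρ ^ 2) ^ 2)]; gcongr
    have h2 : |ρ / (1 - ρ ^ 2)| ≤ 1 / (1 - ρ ^ 2) ^ 2 := by
      rw [abs_div, abs_of_pos hs, div_le_div_iff₀ hs (by positivity)]
      nlinarith [mul_le_of_le_one_left hs.le hρ.le, mul_nonneg (abs_nonneg ρ) hs.le]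
    calc _ ≤ 2 * (u ^ 2 + v ^ 2) / (1 - ρ ^ 2) ^ 2 + 1 / (1 - ρ ^ 2) ^ 2 :=
          (abs_add_le _ _).trans (add_le_add h1 h2)
      _ ≤ 2 * (1 + (u ^ 2 + v ^ 2)) / (1 - ρ ^ 2) ^ 2 := by
          rw [← add_div]; gcongr; linarith
  rw [pdfDerivFstSnd, abs_mul, abs_of_pos hp]
  calc pdf ρ u v * |_| ≤ pdf ρ u v * (2 * (1 + (u ^ 2 + v ^ 2)) / (1 - ρ ^ 2) ^ 2) := by gcongr
    _ = _ := by ring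

lemma exists_dominating {a : ℝ} (ha0 : 0 ≤ a) (ha : a < 1) :
    ∃ C k : ℝ, 0 < k ∧ ∀ ρ, |ρ| ≤ a → ∀ u v,
      |pdf ρ u v| ≤ C * exp (-(k * u ^ 2)) * exp (-(k * v ^ 2)) ∧
      |pdfDerivFst ρ u v| ≤ C * exp (-(k * u ^ 2)) * exp (-(k * v ^ 2)) ∧
      |pdfDerivFstSnd ρ u v| ≤ C * exp (-(k * u ^ 2)) * exp (-(k * v ^ 2)) := by
  obtain ⟨C, k, hk, hC⟩ := exists_pdf_mul_le ha0 ha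
  refine ⟨2 / (1 - a ^ 2) ^ 2 * C, k, hk, fun ρ hρ u v => ?_⟩
  have hρ1 : |ρ| < 1 := hρ.trans_lt ha
  have hs := one_sub_sq_pos hρ1
  have hs1 : 1 - ρ ^ 2 ≤ 1 := by nlinarith
  have hsa : 1 - a ^ 2 ≤ 1 - ρ ^ 2 := by
    nlinarith [sq_abs ρ, mul_le_mul hρ hρ (abs_nonneg ρ) ha0]
  have hp := pdf_pos hρ1 u v
  have hT : 0 ≤ u ^ 2 + v ^ 2 := by positivity
  have hbound : 2 * (pdf ρ u v * (1 + (u ^ 2 + v ^ 2))) / (1 - ρ ^ 2) ^ 2 ≤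
      2 / (1 - a ^ 2) ^ 2 * C * exp (-(k * u ^ 2)) * exp (-(k * v ^ 2)) := by
    have ha2 : 0 < 1 - a ^ 2 := by nlinarith
    calc 2 * (pdf ρ u v * (1 + (u ^ 2 + v ^ 2))) / (1 - ρ ^ 2) ^ 2
        = 2 / (1 - ρ ^ 2) ^ 2 * (pdf ρ u v * (1 + (u ^ 2 + v ^ 2))) := by ring
      _ ≤ 2 / (1 - a ^ 2) ^ 2 * (C * exp (-(k * u ^ 2)) * exp (-(k * v ^ 2))) :=
          mul_le_mul (by gcongr) (hC ρ hρ u v) (by positivity) (by positivity)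
      _ = _ := by ring
  refine ⟨le_trans ?_ hbound, (abs_pdfDerivFst_le hρ1 u v).trans hbound,
    (abs_pdfDerivFstSnd_le hρ1 u v).trans hbound⟩
  rw [abs_of_pos hp, le_div_iff₀ (by positivity)]
  nlinarith [mul_le_mul hs1 hs1 hs.le zero_le_one, mul_nonneg hp.le hT]

lemma continuous_pdf (ρ : ℝ) : Continuous fun p : ℝ × ℝ => pdf ρ p.1 p.2 := by
  unfold pdf; fun_prop

lemma continuous_pdfDerivFst (ρ : ℝ) : Continuous fun p : ℝ × ℝ => pdfDerivFst ρ p.1 p.2 := by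
  unfold pdfDerivFst pdf; fun_prop

lemma continuous_pdfDerivFstSnd (ρ : ℝ) :
    Continuous fun p : ℝ × ℝ => pdfDerivFstSnd ρ p.1 p.2 := by
  unfold pdfDerivFstSnd pdf; fun_prop

lemma integral_Ioi_pdfDerivFstSnd (hρ : |ρ| < 1) (u b : ℝ) :
    ∫ v in Ioi b, pdfDerivFstSnd ρ u v = -pdfDerivFst ρ u b := by
  obtain ⟨C, k, hk, hdom⟩ := exists_dominating (abs_nonneg ρ) hρ
  have hint : Integrable fun v => pdfDerivFstSnd ρ u v :=
    integrable_of_abs_le_exp_neg_mul_sq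
      ((continuous_pdfDerivFstSnd ρ).comp₂ continuous_const continuous_id) hk
      fun v => (hdom ρ le_rfl u v).2.2
  rw [integral_Ioi_of_hasDerivAt_of_tendsto' (fun v _ => hasDerivAt_pdfDerivFst_snd hρ u v)
    hint.integrableOn (tendsto_zero_of_abs_le_exp_neg_mul_sq hk fun v => (hdom ρ le_rfl u v).2.1),
    zero_sub]

lemma integral_Ioi_pdfDerivFst (hρ : |ρ| < 1) (a b : ℝ) :
    ∫ u in Ioi a, pdfDerivFst ρ u b = -pdf ρ a b := by
  obtain ⟨C, k, hk, hdom⟩ := exists_dominating (abs_nonneg ρ) hρ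
  have hswap : ∀ u, C * exp (-(k * u ^ 2)) * exp (-(k * b ^ 2)) =
      C * exp (-(k * b ^ 2)) * exp (-(k * u ^ 2)) := fun u => by ring
  have hc : Continuous fun u => pdfDerivFst ρ u b :=
    (continuous_pdfDerivFst ρ).comp₂ continuous_id continuous_const
  have hint : Integrable fun u => pdfDerivFst ρ u b :=
    integrable_of_abs_le_exp_neg_mul_sq hc hk
      fun u => ((hdom ρ le_rfl u b).2.1).trans_eq (hswap u)
  have ht : Tendsto (fun u => pdf ρ u b) atTop (𝓝 0) := tendsto_zero_of_abs_le_exp_neg_mul_sq hk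
      fun u => ((hdom ρ le_rfl u b).1).trans_eq (hswap u)
  rw [integral_Ioi_of_hasDerivAt_of_tendsto' (fun u _ => hasDerivAt_pdf_fst hρ u b)
    hint.integrableOn ht, zero_sub]

lemma integral_orthant_pdfDerivFstSnd (hρ : |ρ| < 1) (a b : ℝ) :
    ∫ p in Ioi a ×ˢ Ioi b, pdfDerivFstSnd ρ p.1 p.2 = pdf ρ a b := by
  obtain ⟨C, k, hk, hdom⟩ := exists_dominating (abs_nonneg ρ) hρ
  have hint : Integrable fun p : ℝ × ℝ => pdfDerivFstSnd ρ p.1 p.2 :=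
    integrable_of_abs_le_exp_neg_mul_sq_mul (continuous_pdfDerivFstSnd ρ) hk
      fun p => (hdom ρ le_rfl p.1 p.2).2.2
  rw [Measure.volume_eq_prod,
    setIntegral_prod _ (by simpa only [← Measure.volume_eq_prod] using hint.integrableOn)]
  simp only [integral_Ioi_pdfDerivFstSnd hρ, integral_neg, integral_Ioi_pdfDerivFst hρ, neg_neg]

lemma hasDerivAt_integral_orthant_pdf (hρ : |ρ| < 1) (a b : ℝ) :
    HasDerivAt (fun r => ∫ p in Ioi a ×ˢ Ioi b, pdf r p.1 p.2) (pdf ρ a b) ρ := by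
  have hball : ∀ r ∈ Metric.ball ρ ((1 - |ρ|) / 2), |r| ≤ (1 + |ρ|) / 2 := fun r hr => by
    have := abs_sub_abs_le_abs_sub r ρ
    rw [Metric.mem_ball, Real.dist_eq] at hr
    linarith
  obtain ⟨C, k, hk, hdom⟩ := exists_dominating (a := (1 + |ρ|) / 2) (by positivity) (by linarith)
  have hρ' : |ρ| ≤ (1 + |ρ|) / 2 := by linarith
  have hderiv := hasDerivAt_integral_of_dominated_loc_of_deriv_le
    (μ := volume.restrict (Ioi a ×ˢ Ioi b)) (F := fun r (p : ℝ × ℝ) => pdf r p.1 p.2)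
    (F' := fun r (p : ℝ × ℝ) => pdfDerivFstSnd r p.1 p.2)
    (bound := fun p => C * exp (-(k * p.1 ^ 2)) * exp (-(k * p.2 ^ 2)))
    (Metric.ball_mem_nhds ρ (by linarith))
    (.of_forall fun r => (continuous_pdf r).aestronglyMeasurable)
    (integrable_of_abs_le_exp_neg_mul_sq_mul (continuous_pdf ρ) hk
      fun p => (hdom ρ hρ' p.1 p.2).1).integrableOn
    (continuous_pdfDerivFstSnd ρ).aestronglyMeasurable
    (.of_forall fun p r hr => (norm_eq_abs _).trans_le (hdom r (hball r hr) p.1 p.2).2.2)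
    (integrable_mul_exp_neg_mul_sq_mul_exp_neg_mul_sq C hk).integrableOn
    (.of_forall fun p r hr =>
      hasDerivAt_pdf_corr ((hball r hr).trans_lt (by linarith)) p.1 p.2)
  simpa only [integral_orthant_pdfDerivFstSnd hρ] using hderiv.2

lemma orthantProb_eq_integral_pdf (μ₁ μ₂ ρ : ℝ) :
    orthantProb μ₁ μ₂ ρ = ∫ p in Ioi (-μ₁) ×ˢ Ioi (-μ₂), pdf ρ p.1 p.2 := by
  have h := (measurePreserving_sub_right volume (μ₁, μ₂)).setIntegral_preimage_emb
    (measurableEmbedding_subRight _) (fun p => pdf ρ p.1 p.2) (Ioi (-μ₁) ×ˢ Ioi (-μ₂))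
  have hpre : (fun p => p - (μ₁, μ₂)) ⁻¹' (Ioi (-μ₁) ×ˢ Ioi (-μ₂)) = Ioi 0 ×ˢ Ioi 0 := by
    ext p; simp [neg_lt_sub_iff_lt_add]
  rw [← h, hpre]
  rfl

end BivariateNormal

/-- The bivariate Gaussian orthant probability is strictly increasing in the
correlation `ρ ∈ (-1, 1)`, for any fixed mean. -/
theorem stmt_13 (μ₁ μ₂ : ℝ) :
    StrictMonoOn (orthantProb μ₁ μ₂) (Set.Ioo (-1 : ℝ) 1) := by
  have hderiv : ∀ ρ ∈ Ioo (-1 : ℝ) 1,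
      HasDerivAt (orthantProb μ₁ μ₂) (BivariateNormal.pdf ρ (-μ₁) (-μ₂)) ρ := fun ρ hρ => by
    simpa only [funext (BivariateNormal.orthantProb_eq_integral_pdf μ₁ μ₂)] using
      BivariateNormal.hasDerivAt_integral_orthant_pdf (abs_lt.mpr hρ) (-μ₁) (-μ₂)
  refine strictMonoOn_of_hasDerivWithinAt_pos (convex_Ioo _ _)
    (fun ρ hρ => (hderiv ρ hρ).continuousAt.continuousWithinAt)
    (fun ρ hρ => (hderiv ρ (interior_subset hρ)).hasDerivWithinAt) fun ρ hρ => ?_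
  rw [interior_Ioo] at hρ
  exact BivariateNormal.pdf_pos (abs_lt.mpr hρ) _ _
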